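/- The two-particle S-matrix acts on scattering states by the scattering function: let f, g ∈ L²(ℝ, ℂ) with essential supports satisfying supp f − supp g ⊆ [0, ∞) (i.e. θ ≥ θ′ whenever θ ∈ supp f and θ′ ∈ supp g). Then for almost every (θ₁, θ₂) ∈ ℝ²: S₂(|θ₁ − θ₂|)·(g(θ₁)f(θ₂) + S₂(θ₂ − θ₁)·g(θ₂)f(θ₁)) = f(θ₁)g(θ₂) + S₂(θ₂ − θ₁)·f(θ₂)g(θ₁); equivalently, the multiplication operator S by the function (θ₁,θ₂) ↦ S₂(|θ₁−θ₂|) on L²(ℝ²) maps the outgoing two-particle state √2·P₂(g ⊗ f) to the incoming two-particle state √2·P₂(f ⊗ g). -/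

import Mathlib

open MeasureTheory Complex

/-!
The identity holds at every point, not only almost everywhere. Off the diagonal the support
condition kills one summand on each side, and the survivors agree because
`S₂(-θ) S₂(θ) = |S₂(θ)|² = 1`; on the diagonal the identity reduces to `S₂(0)² = 1`.
-/

theorem mul_eq_zero_of_lt_of_support_le {α M : Type*} [LinearOrder α] [MulZeroClass M]
    {f g : α → M} (hsupp : ∀ θ θ' : α, f θ ≠ 0 → g θ' ≠ 0 → θ' ≤ θ) {a b : α} (hab : a < b) :
    f a * g b = 0 := by
  by_contra hne
  exact (hsupp a b (left_ne_zero_of_mul hne) (right_ne_zero_of_mul hne)).not_gt hab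

theorem two_particle_scattering_identity {α R : Type*} [AddCommGroup α] [LinearOrder α]
    [IsOrderedAddMonoid α] [CommRing R] {S : α → R} (hS : ∀ θ, S (-θ) * S θ = 1)
    {f g : α → R} (hsupp : ∀ θ θ' : α, f θ ≠ 0 → g θ' ≠ 0 → θ' ≤ θ) (θ₁ θ₂ : α) :
    S |θ₁ - θ₂| * (g θ₁ * f θ₂ + S (θ₂ - θ₁) * (g θ₂ * f θ₁))
      = f θ₁ * g θ₂ + S (θ₂ - θ₁) * (f θ₂ * g θ₁) := by
  rcases lt_trichotomy θ₁ θ₂ with hlt | rfl | hgt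
  · have hfg : f θ₁ * g θ₂ = 0 := mul_eq_zero_of_lt_of_support_le hsupp hlt
    rw [abs_sub_comm, abs_of_pos (sub_pos.mpr hlt), mul_comm (g θ₂), hfg]
    ring
  · have hS0 : S 0 * S 0 = 1 := by simpa using hS 0
    rw [sub_self, abs_zero]
    linear_combination (g θ₁ * f θ₁) * hS0
  · have hfg : f θ₂ * g θ₁ = 0 := mul_eq_zero_of_lt_of_support_le hsupp hgt
    rw [abs_of_pos (sub_pos.mpr hgt), ← neg_sub, mul_comm (g θ₁), hfg]
    linear_combination (g θ₂ * f θ₁) * hS (θ₂ - θ₁)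

theorem statement19 (S₂ : ℝ → ℂ)
    (hS₂abs : ∀ θ : ℝ, ‖S₂ θ‖ = 1)
    (hS₂sym : ∀ θ : ℝ, S₂ (-θ) = starRingEnd ℂ (S₂ θ))
    (f g : ℝ → ℂ)
    (hsupp : ∀ θ θ' : ℝ, f θ ≠ 0 → g θ' ≠ 0 → θ' ≤ θ) :
    ∀ᵐ p ∂(volume : Measure (ℝ × ℝ)),
      S₂ |p.1 - p.2| * (g p.1 * f p.2 + S₂ (p.2 - p.1) * (g p.2 * f p.1))
        = f p.1 * g p.2 + S₂ (p.2 - p.1) * (f p.2 * g p.1) := by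
  have hunit : ∀ θ, S₂ (-θ) * S₂ θ = 1 := fun θ => by
    have hne : S₂ θ ≠ 0 := norm_ne_zero_iff.mp (by rw [hS₂abs]; exact one_ne_zero)
    rw [hS₂sym, ← Complex.inv_eq_conj (hS₂abs θ), inv_mul_cancel₀ hne]
  exact .of_forall fun p => two_particle_scattering_identity hunit hsupp p.1 p.2
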